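/- For 0 < q < p ≤ 1, natural number n, and any continuous function f on [0,1], the inequality |M_{n,p,q}(f; x) − f(x)| ≤ 2 ω(f, √(p^n / [n+1]_{p,q})) holds for all x ∈ [0,1], where ω denotes the modulus of continuity of f. -/

import Mathlib

open Filter Topology

noncomputable def pqInt (p q : ℝ) (n : ℕ) : ℝ := (p ^ n - q ^ n) / (p - q)

noncomputable def pqFact (p q : ℝ) (n : ℕ) : ℝ :=
  ∏ j ∈ Finset.range n, pqInt p q (j + 1)

noncomputable def pqBinom (p q : ℝ) (n k : ℕ) : ℝ :=
  pqFact p q n / (pqFact p q k * pqFact p q (n - k))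

noncomputable def mkz (p q : ℝ) (n : ℕ) (f : ℝ → ℝ) (x : ℝ) : ℝ :=
  if x = 1 then f 1 else
    (p ^ (n * (n + 1) / 2))⁻¹ *
      ∑' k : ℕ, pqBinom p q (n + k) k * x ^ k * (p ^ (k * n))⁻¹ *
        (∏ s ∈ Finset.range (n + 1), (p ^ s - q ^ s * x)) *
        f (p ^ n * pqInt p q k / pqInt p q (n + k))

noncomputable def supNorm (g : ℝ → ℝ) : ℝ :=
  sSup ((fun x => |g x|) '' Set.Icc (0 : ℝ) 1)

noncomputable def modCont (f : ℝ → ℝ) (δ : ℝ) : ℝ :=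
  sSup ((fun p : ℝ × ℝ => |f p.1 - f p.2|) ''
    {p : ℝ × ℝ | p.1 ∈ Set.Icc (0 : ℝ) 1 ∧ p.2 ∈ Set.Icc (0 : ℝ) 1 ∧ |p.1 - p.2| ≤ δ})

def StatLim (x : ℕ → ℝ) (L : ℝ) : Prop :=
  ∀ ε > 0, Filter.Tendsto
    (fun n => (((Finset.range (n + 1)).filter (fun k => ε ≤ |x k - L|)).card : ℝ) / (n : ℝ))
    Filter.atTop (nhds 0)


/-!
Writing `t = q / p`, the `(p, q)`-operator is the `(1, t)`-operator, which is a positive linear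
operator `f ↦ ∑ₖ wₖ(x) f(ξₖ)` with nodes `ξₖ = [k]/[n+k]`, where `[m] = 1 + t + ⋯ + tᵐ⁻¹`, and
weights `wₖ(x) = [n+k choose k] xᵏ ∏ₛ (1 - tˢ x)`. The weights sum to `1` by Euler's `q`-binomial
series, proved by induction on `n` from the `q`-Pascal rule. The index shift `wₖ₊₁ ξₖ₊₁ = x wₖ`
gives the first moment `x`, and together with `ξₖ₊₁ ≤ 1/[n+1] + ξₖ` a second central moment at
most `x/[n+1] ≤ 1/[n+1] = pⁿ/[n+1]_{p,q}`. The Shisha–Mond estimate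
`|f s - f y| ≤ (1 + (s - y)² / δ²) ω(f, δ)` then bounds the error by `2 ω(f, δ)`.
-/

open Set
open Finset (range)

section ModulusOfContinuity

variable {f : ℝ → ℝ}

lemma bddAbove_modCont_image (hf : ContinuousOn f (Icc 0 1)) (δ : ℝ) :
    BddAbove ((fun p : ℝ × ℝ => |f p.1 - f p.2|) ''
      {p : ℝ × ℝ | p.1 ∈ Icc (0 : ℝ) 1 ∧ p.2 ∈ Icc (0 : ℝ) 1 ∧ |p.1 - p.2| ≤ δ}) := by
  obtain ⟨M, hM⟩ := isCompact_Icc.exists_bound_of_continuousOn hf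
  refine ⟨2 * M, ?_⟩
  rintro _ ⟨⟨a, b⟩, ⟨ha, hb, -⟩, rfl⟩
  have ha' := hM a ha
  have hb' := hM b hb
  rw [Real.norm_eq_abs] at ha' hb'
  linarith [abs_sub (f a) (f b)]

lemma abs_sub_le_modCont (hf : ContinuousOn f (Icc 0 1)) {s y δ : ℝ} (hs : s ∈ Icc (0 : ℝ) 1)
    (hy : y ∈ Icc (0 : ℝ) 1) (hsy : |s - y| ≤ δ) : |f s - f y| ≤ modCont f δ :=
  le_csSup (bddAbove_modCont_image hf δ) ⟨(s, y), ⟨hs, hy, hsy⟩, rfl⟩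

lemma modCont_nonneg (hf : ContinuousOn f (Icc 0 1)) {δ : ℝ} (hδ : 0 ≤ δ) : 0 ≤ modCont f δ := by
  simpa using abs_sub_le_modCont hf (s := 0) (y := 0) (by simp) (by simp) (by simpa using hδ)

lemma abs_sub_le_nat_mul_modCont (hf : ContinuousOn f (Icc 0 1)) {δ : ℝ} (m : ℕ) :
    ∀ {s y : ℝ}, s ∈ Icc (0 : ℝ) 1 → y ∈ Icc (0 : ℝ) 1 → |s - y| ≤ m * δ →
      |f s - f y| ≤ m * modCont f δ := by
  induction m with
  | zero =>
    intro s y _ _ hsy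
    obtain rfl : s = y := sub_eq_zero.mp (by simpa using hsy)
    simp
  | succ m ih =>
    intro s y hs hy hsy
    have hm : (0 : ℝ) < m + 1 := by positivity
    obtain ⟨z, hz_def⟩ : ∃ z : ℝ, z = y + (s - y) / (m + 1) := ⟨_, rfl⟩
    have hz : z ∈ Icc (0 : ℝ) 1 := by
      have hz' : z = (m / (m + 1)) * y + (1 / (m + 1)) * s := by rw [hz_def]; field_simp; ring
      rw [hz']
      exact convex_Icc (0 : ℝ) 1 hy hs (a := (m : ℝ) / (m + 1)) (b := 1 / ((m : ℝ) + 1))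
        (by positivity) (by positivity) (by field_simp)
    have hzy : |z - y| ≤ δ := by
      rw [hz_def, add_sub_cancel_left, abs_div, abs_of_pos hm, div_le_iff₀ hm]
      push_cast at hsy
      linarith
    have hsz : |s - z| ≤ m * δ := by
      have : s - z = (m / (m + 1)) * (s - y) := by rw [hz_def]; field_simp; ring
      rw [this, abs_mul, abs_of_nonneg (by positivity), div_mul_eq_mul_div, div_le_iff₀ hm]
      push_cast at hsy
      nlinarith [m.cast_nonneg (α := ℝ)]
    calc |f s - f y| ≤ |f s - f z| + |f z - f y| := abs_sub_le _ _ _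
      _ ≤ m * modCont f δ + modCont f δ :=
          add_le_add (ih hs hz hsz) (abs_sub_le_modCont hf hz hy hzy)
      _ = (m + 1 : ℕ) * modCont f δ := by push_cast; ring

lemma abs_sub_le_one_add_sq_div_mul_modCont (hf : ContinuousOn f (Icc 0 1)) {s y δ : ℝ}
    (hδ : 0 < δ) (hs : s ∈ Icc (0 : ℝ) 1) (hy : y ∈ Icc (0 : ℝ) 1) :
    |f s - f y| ≤ (1 + (s - y) ^ 2 / δ ^ 2) * modCont f δ := by
  set r := |s - y| / δ
  have hr : 0 ≤ r := by positivity
  have hr2 : r ^ 2 = (s - y) ^ 2 / δ ^ 2 := by rw [div_pow, sq_abs]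
  have hceil : (⌈r⌉₊ : ℝ) ≤ 1 + (s - y) ^ 2 / δ ^ 2 := by
    rcases le_or_gt r 1 with h | h
    · have : (⌈r⌉₊ : ℝ) ≤ 1 := by exact_mod_cast Nat.ceil_le.mpr (by simpa using h)
      nlinarith
    · nlinarith [Nat.ceil_lt_add_one hr]
  have hsy : |s - y| ≤ ⌈r⌉₊ * δ := by
    have := (div_le_iff₀ hδ).mp (Nat.le_ceil r)
    linarith
  calc |f s - f y| ≤ ⌈r⌉₊ * modCont f δ := abs_sub_le_nat_mul_modCont hf _ hs hy hsy
    _ ≤ _ := mul_le_mul_of_nonneg_right hceil (modCont_nonneg hf hδ.le)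

end ModulusOfContinuity

section PositiveSums

lemma abs_tsum_mul_sub_le_two_mul_modCont {ι : Type*} {f : ℝ → ℝ}
    (hf : ContinuousOn f (Icc 0 1)) {w ξ : ι → ℝ} {x δ : ℝ} (hw0 : ∀ i, 0 ≤ w i)
    (hw : HasSum w 1) (hξ : ∀ i, ξ i ∈ Icc (0 : ℝ) 1) (hx : x ∈ Icc (0 : ℝ) 1) (hδ : 0 < δ)
    (hvar : ∑' i, w i * (ξ i - x) ^ 2 ≤ δ ^ 2) :
    |∑' i, w i * f (ξ i) - f x| ≤ 2 * modCont f δ := by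
  set K := modCont f δ
  obtain ⟨M, hM⟩ := isCompact_Icc.exists_bound_of_continuousOn hf
  have hfξ : Summable fun i => w i * f (ξ i) :=
    Summable.of_norm_bounded (hw.summable.mul_right M) fun i => by
      rw [norm_mul, Real.norm_of_nonneg (hw0 i)]
      exact mul_le_mul_of_nonneg_left (hM _ (hξ i)) (hw0 i)
  have hsq : Summable fun i => w i * (ξ i - x) ^ 2 :=
    hw.summable.of_nonneg_of_le (fun i => mul_nonneg (hw0 i) (sq_nonneg _)) fun i => by
      have : (ξ i - x) ^ 2 ≤ 1 := by
        rw [sq_le_one_iff_abs_le_one, abs_le]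
        constructor <;> linarith [(hξ i).1, (hξ i).2, hx.1, hx.2]
      simpa using mul_le_mul_of_nonneg_left this (hw0 i)
  have hdiff : HasSum (fun i => w i * (f (ξ i) - f x)) (∑' i, w i * f (ξ i) - f x) := by
    simpa [mul_sub] using hfξ.hasSum.sub (hw.mul_right (f x))
  have hmajor : HasSum (fun i => w i * K + w i * (ξ i - x) ^ 2 * (K / δ ^ 2))
      (K + (∑' i, w i * (ξ i - x) ^ 2) * (K / δ ^ 2)) := by
    simpa using (hw.mul_right K).add (hsq.hasSum.mul_right (K / δ ^ 2))
  have hterm : ∀ i, ‖w i * (f (ξ i) - f x)‖ ≤ w i * K + w i * (ξ i - x) ^ 2 * (K / δ ^ 2) := by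
    intro i
    rw [norm_mul, Real.norm_of_nonneg (hw0 i), Real.norm_eq_abs]
    have := abs_sub_le_one_add_sq_div_mul_modCont hf hδ (hξ i) hx
    calc w i * |f (ξ i) - f x| ≤ w i * ((1 + (ξ i - x) ^ 2 / δ ^ 2) * K) :=
          mul_le_mul_of_nonneg_left this (hw0 i)
      _ = _ := by ring
  have hK : 0 ≤ K / δ ^ 2 := div_nonneg (modCont_nonneg hf hδ.le) (sq_nonneg δ)
  calc |∑' i, w i * f (ξ i) - f x|
      ≤ K + (∑' i, w i * (ξ i - x) ^ 2) * (K / δ ^ 2) := hdiff.norm_le_of_bounded hmajor hterm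
    _ ≤ K + δ ^ 2 * (K / δ ^ 2) := by gcongr
    _ = 2 * K := by field_simp; ring

variable {w ξ : ℕ → ℝ} {x : ℝ}

lemma hasSum_mul_of_succ_mul_eq (hw : HasSum w 1) (hξ0 : ξ 0 = 0)
    (hshift : ∀ k, w (k + 1) * ξ (k + 1) = x * w k) : HasSum (fun k => w k * ξ k) x := by
  have h : HasSum (fun k => w (k + 1) * ξ (k + 1)) x := by
    have := hw.mul_left x
    rwa [mul_one, ← funext hshift] at this
  simpa only [hξ0, mul_zero, zero_add] using h.zero_add (f := fun k => w k * ξ k)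

lemma summable_mul_sq (hw0 : ∀ k, 0 ≤ w k) (hw : HasSum w 1) (hξ : ∀ k, ξ k ∈ Icc (0 : ℝ) 1) :
    Summable fun k => w k * ξ k ^ 2 :=
  hw.summable.of_nonneg_of_le (fun k => mul_nonneg (hw0 k) (sq_nonneg _)) fun k =>
    mul_le_of_le_one_right (hw0 k) (pow_le_one₀ (hξ k).1 (hξ k).2)

variable {c : ℝ}

lemma tsum_mul_sq_le (hw0 : ∀ k, 0 ≤ w k) (hw : HasSum w 1) (hξ : ∀ k, ξ k ∈ Icc (0 : ℝ) 1)
    (hx : 0 ≤ x) (hξ0 : ξ 0 = 0) (hshift : ∀ k, w (k + 1) * ξ (k + 1) = x * w k)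
    (hstep : ∀ k, ξ (k + 1) ≤ c + ξ k) : ∑' k, w k * ξ k ^ 2 ≤ x * (c + x) := by
  -- shifting the index trades one factor `ξ (k + 1)` for `x`
  have hshifted : HasSum (fun k => x * (w k * ξ (k + 1))) (∑' k, w k * ξ k ^ 2) := by
    have h := (hasSum_nat_add_iff' 1).mpr (summable_mul_sq hw0 hw hξ).hasSum
    have e : (fun k => w (k + 1) * ξ (k + 1) ^ 2) = fun k => x * (w k * ξ (k + 1)) :=
      funext fun k => by rw [sq, ← mul_assoc, hshift, mul_assoc]
    rwa [e, Finset.sum_range_one, hξ0, zero_pow two_ne_zero, mul_zero, sub_zero] at h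
  have hmajor : HasSum (fun k => x * (c * w k + w k * ξ k)) (x * (c + x)) := by
    simpa using ((hw.mul_left c).add (hasSum_mul_of_succ_mul_eq hw hξ0 hshift)).mul_left x
  refine hasSum_le (fun k => ?_) hshifted hmajor
  gcongr
  calc w k * ξ (k + 1) ≤ w k * (c + ξ k) := mul_le_mul_of_nonneg_left (hstep k) (hw0 k)
    _ = c * w k + w k * ξ k := by ring

lemma tsum_mul_sub_sq_le (hw0 : ∀ k, 0 ≤ w k) (hw : HasSum w 1)
    (hξ : ∀ k, ξ k ∈ Icc (0 : ℝ) 1) (hx : 0 ≤ x) (hξ0 : ξ 0 = 0)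
    (hshift : ∀ k, w (k + 1) * ξ (k + 1) = x * w k) (hstep : ∀ k, ξ (k + 1) ≤ c + ξ k) :
    ∑' k, w k * (ξ k - x) ^ 2 ≤ c * x := by
  have hsplit : HasSum (fun k => w k * (ξ k - x) ^ 2)
      (∑' k, w k * ξ k ^ 2 - 2 * x * x + x ^ 2 * 1) := by
    have e : (fun k => w k * (ξ k - x) ^ 2) =
        fun k => w k * ξ k ^ 2 - 2 * x * (w k * ξ k) + x ^ 2 * w k := funext fun k => by ring
    rw [e]
    exact ((summable_mul_sq hw0 hw hξ).hasSum.sub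
      ((hasSum_mul_of_succ_mul_eq hw hξ0 hshift).mul_left (2 * x))).add (hw.mul_left (x ^ 2))
  rw [hsplit.tsum_eq]
  linarith [tsum_mul_sq_le hw0 hw hξ hx hξ0 hshift hstep]

end PositiveSums

section QIntegers

variable {t : ℝ}

lemma pqInt_one_eq_geom_sum (ht : t ≠ 1) (m : ℕ) : pqInt 1 t m = ∑ i ∈ range m, t ^ i := by
  rw [pqInt, geom_sum_eq ht, one_pow, ← neg_sub, ← neg_sub t, neg_div_neg_eq]

lemma pqInt_one_add (ht : t ≠ 1) (a b : ℕ) :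
    pqInt 1 t (a + b) = pqInt 1 t a + t ^ a * pqInt 1 t b := by
  simp only [pqInt_one_eq_geom_sum ht, Finset.sum_range_add, pow_add, Finset.mul_sum]

lemma pqInt_one_succ (ht : t ≠ 1) (m : ℕ) : pqInt 1 t (m + 1) = 1 + t * pqInt 1 t m := by
  rw [add_comm m, pqInt_one_add ht, pqInt_one_eq_geom_sum ht 1]
  simp

lemma pqInt_one_nonneg (ht0 : 0 ≤ t) (ht : t ≠ 1) (m : ℕ) : 0 ≤ pqInt 1 t m := by
  rw [pqInt_one_eq_geom_sum ht]
  positivity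

lemma one_le_pqInt_one_succ (ht0 : 0 ≤ t) (ht : t ≠ 1) (m : ℕ) : 1 ≤ pqInt 1 t (m + 1) := by
  rw [pqInt_one_succ ht]
  linarith [mul_nonneg ht0 (pqInt_one_nonneg ht0 ht m)]

lemma pqInt_one_succ_pos (ht0 : 0 ≤ t) (ht : t ≠ 1) (m : ℕ) : 0 < pqInt 1 t (m + 1) :=
  one_pos.trans_le (one_le_pqInt_one_succ ht0 ht m)

lemma pqInt_one_mono (ht0 : 0 ≤ t) (ht : t ≠ 1) {m m' : ℕ} (h : m ≤ m') :
    pqInt 1 t m ≤ pqInt 1 t m' := by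
  simp only [pqInt_one_eq_geom_sum ht]
  exact Finset.sum_le_sum_of_subset_of_nonneg (Finset.range_mono h) fun i _ _ => by positivity

lemma pqInt_one_le_inv_one_sub (ht0 : 0 ≤ t) (ht1 : t < 1) (m : ℕ) :
    pqInt 1 t m ≤ (1 - t)⁻¹ := by
  rw [pqInt_one_eq_geom_sum ht1.ne, Finset.range_eq_Ico, inv_eq_one_div, ← pow_zero t]
  exact geom_sum_Ico_le_of_lt_one ht0 ht1

lemma pqFact_zero (p q : ℝ) : pqFact p q 0 = 1 := Finset.prod_range_zero _

lemma pqFact_succ (p q : ℝ) (m : ℕ) : pqFact p q (m + 1) = pqFact p q m * pqInt p q (m + 1) :=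
  Finset.prod_range_succ _ _

lemma pqFact_one_pos (ht0 : 0 ≤ t) (ht : t ≠ 1) (m : ℕ) : 0 < pqFact 1 t m :=
  Finset.prod_pos fun j _ => pqInt_one_succ_pos ht0 ht j

end QIntegers

section MKZCoefficients

variable {t : ℝ}

noncomputable def mkzCoeff (t : ℝ) (n k : ℕ) : ℝ := pqBinom 1 t (n + k) k

noncomputable def mkzNode (t : ℝ) (n k : ℕ) : ℝ := pqInt 1 t k / pqInt 1 t (n + k)

lemma mkzCoeff_eq (n k : ℕ) :
    mkzCoeff t n k = pqFact 1 t (n + k) / (pqFact 1 t k * pqFact 1 t n) := by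
  rw [mkzCoeff, pqBinom, Nat.add_sub_cancel]

lemma mkzCoeff_zero_left (ht0 : 0 ≤ t) (ht : t ≠ 1) (k : ℕ) : mkzCoeff t 0 k = 1 := by
  rw [mkzCoeff_eq, zero_add, pqFact_zero, mul_one,
    div_self (pqFact_one_pos ht0 ht k).ne']

lemma mkzCoeff_zero_right (ht0 : 0 ≤ t) (ht : t ≠ 1) (n : ℕ) : mkzCoeff t n 0 = 1 := by
  rw [mkzCoeff_eq, add_zero, pqFact_zero, one_mul,
    div_self (pqFact_one_pos ht0 ht n).ne']

lemma mkzCoeff_pos (ht0 : 0 ≤ t) (ht : t ≠ 1) (n k : ℕ) : 0 < mkzCoeff t n k := by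
  rw [mkzCoeff_eq]
  have := pqFact_one_pos ht0 ht
  exact div_pos (this _) (mul_pos (this _) (this _))

lemma mkzCoeff_succ_succ (ht0 : 0 ≤ t) (ht : t ≠ 1) (n k : ℕ) :
    mkzCoeff t (n + 1) (k + 1) = mkzCoeff t (n + 1) k + t ^ (k + 1) * mkzCoeff t n (k + 1) := by
  have hsplit :
      pqInt 1 t (n + k + 1 + 1) = pqInt 1 t (k + 1) + t ^ (k + 1) * pqInt 1 t (n + 1) := by
    rw [← pqInt_one_add ht, show k + 1 + (n + 1) = n + k + 1 + 1 by ring]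
  simp only [mkzCoeff_eq, show n + 1 + (k + 1) = n + k + 1 + 1 by ring,
    show n + 1 + k = n + k + 1 by ring, show n + (k + 1) = n + k + 1 by ring,
    pqFact_succ _ _ (n + k + 1), pqFact_succ _ _ k, pqFact_succ _ _ n, hsplit]
  have := (pqFact_one_pos ht0 ht k).ne'
  have := (pqFact_one_pos ht0 ht n).ne'
  have := (pqInt_one_succ_pos ht0 ht k).ne'
  have := (pqInt_one_succ_pos ht0 ht n).ne'
  field_simp

lemma mkzCoeff_succ_left_mul (ht0 : 0 ≤ t) (ht : t ≠ 1) (n k : ℕ) :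
    mkzCoeff t (n + 1) k * pqInt 1 t (n + 1) = mkzCoeff t n k * pqInt 1 t (n + k + 1) := by
  simp only [mkzCoeff_eq, show n + 1 + k = n + k + 1 by ring, pqFact_succ _ _ (n + k),
    pqFact_succ _ _ n]
  have := (pqFact_one_pos ht0 ht k).ne'
  have := (pqFact_one_pos ht0 ht n).ne'
  have := (pqInt_one_succ_pos ht0 ht n).ne'
  field_simp

lemma mkzCoeff_le (ht0 : 0 ≤ t) (ht1 : t < 1) (n k : ℕ) : mkzCoeff t n k ≤ (1 - t)⁻¹ ^ n := by
  induction n with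
  | zero => rw [mkzCoeff_zero_left ht0 ht1.ne, pow_zero]
  | succ n ih =>
    have hn := one_le_pqInt_one_succ ht0 ht1.ne n
    calc mkzCoeff t (n + 1) k ≤ mkzCoeff t (n + 1) k * pqInt 1 t (n + 1) :=
          le_mul_of_one_le_right (mkzCoeff_pos ht0 ht1.ne _ _).le hn
      _ = mkzCoeff t n k * pqInt 1 t (n + k + 1) := mkzCoeff_succ_left_mul ht0 ht1.ne n k
      _ ≤ (1 - t)⁻¹ ^ n * (1 - t)⁻¹ :=
          mul_le_mul ih (pqInt_one_le_inv_one_sub ht0 ht1 _) (pqInt_one_nonneg ht0 ht1.ne _)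
            (pow_nonneg (inv_nonneg.mpr (sub_nonneg.mpr ht1.le)) n)
      _ = (1 - t)⁻¹ ^ (n + 1) := (pow_succ _ _).symm

lemma mkzCoeff_succ_mul_mkzNode (ht0 : 0 ≤ t) (ht : t ≠ 1) (n k : ℕ) :
    mkzCoeff t n (k + 1) * mkzNode t n (k + 1) = mkzCoeff t n k := by
  simp only [mkzNode, mkzCoeff_eq, show n + (k + 1) = n + k + 1 by ring,
    pqFact_succ _ _ (n + k), pqFact_succ _ _ k]
  have := (pqFact_one_pos ht0 ht k).ne'
  have := (pqFact_one_pos ht0 ht n).ne'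
  have := (pqInt_one_succ_pos ht0 ht k).ne'
  have := (pqInt_one_succ_pos ht0 ht (n + k)).ne'
  field_simp

lemma mkzNode_zero (n : ℕ) : mkzNode t n 0 = 0 := by simp [mkzNode, pqInt]

lemma mkzNode_mem_Icc (ht0 : 0 ≤ t) (ht : t ≠ 1) (n k : ℕ) : mkzNode t n k ∈ Icc (0 : ℝ) 1 :=
  ⟨div_nonneg (pqInt_one_nonneg ht0 ht k) (pqInt_one_nonneg ht0 ht _),
    div_le_one_of_le₀ (pqInt_one_mono ht0 ht (Nat.le_add_left k n)) (pqInt_one_nonneg ht0 ht _)⟩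

lemma mkzNode_succ_le (ht0 : 0 ≤ t) (ht : t ≠ 1) (n k : ℕ) :
    mkzNode t n (k + 1) ≤ (pqInt 1 t (n + 1))⁻¹ + mkzNode t n k := by
  have hfirst : 1 / pqInt 1 t (n + k + 1) ≤ (pqInt 1 t (n + 1))⁻¹ := by
    rw [one_div]
    exact inv_anti₀ (pqInt_one_succ_pos ht0 ht n) (pqInt_one_mono ht0 ht (by omega))
  -- because `[n+k+1] = 1 + t [n+k]`
  have hsecond : t * pqInt 1 t k / pqInt 1 t (n + k + 1) ≤ mkzNode t n k := by
    rcases k with _ | k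
    · simp [mkzNode, pqInt]
    · have hk := pqInt_one_succ_pos ht0 ht (n + k)
      have hk' := pqInt_one_succ_pos ht0 ht (n + k + 1)
      rw [mkzNode, ← add_assoc, div_le_div_iff₀ hk' hk, pqInt_one_succ ht (n + k + 1)]
      nlinarith [pqInt_one_nonneg ht0 ht (k + 1)]
  rw [mkzNode, show n + (k + 1) = n + k + 1 by ring, pqInt_one_succ ht k, add_div]
  exact add_le_add hfirst hsecond

end MKZCoefficients

section MKZOperator

variable {t x : ℝ}

lemma summable_mkzCoeff_mul_pow (ht0 : 0 ≤ t) (ht1 : t < 1) (n : ℕ) (hx0 : 0 ≤ x)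
    (hx1 : x < 1) : Summable fun k => mkzCoeff t n k * x ^ k :=
  ((summable_geometric_of_lt_one hx0 hx1).mul_left ((1 - t)⁻¹ ^ n)).of_nonneg_of_le
    (fun k => mul_nonneg (mkzCoeff_pos ht0 ht1.ne n k).le (pow_nonneg hx0 k))
    fun k => mul_le_mul_of_nonneg_right (mkzCoeff_le ht0 ht1 n k) (pow_nonneg hx0 k)

lemma prod_one_sub_pow_mul_succ (n : ℕ) :
    ∏ s ∈ range (n + 2), (1 - t ^ s * x) =
      (1 - x) * ∏ s ∈ range (n + 1), (1 - t ^ s * (t * x)) := by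
  rw [Finset.prod_range_succ', pow_zero, one_mul, mul_comm]
  congr 1
  exact Finset.prod_congr rfl fun s _ => by ring

lemma hasSum_mkzCoeff_mul_pow (ht0 : 0 ≤ t) (ht1 : t < 1) (n : ℕ) (hx0 : 0 ≤ x)
    (hx1 : x < 1) :
    HasSum (fun k => mkzCoeff t n k * x ^ k) (∏ s ∈ range (n + 1), (1 - t ^ s * x))⁻¹ := by
  induction n generalizing x with
  | zero =>
    simpa [mkzCoeff_zero_left ht0 ht1.ne] using hasSum_geometric_of_lt_one hx0 hx1
  | succ n ih =>
    set a := fun k => mkzCoeff t (n + 1) k * x ^ k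
    have ha := summable_mkzCoeff_mul_pow ht0 ht1 (n + 1) hx0 hx1
    have hb := ih (x := t * x) (by positivity) (by nlinarith)
    -- Pascal's rule gives `a (k + 1) = x * a k + b (k + 1)`, with `b` the series at `t * x`
    have htail : HasSum (fun k => a (k + 1)) (∑' k, a k - 1) := by
      simpa [a, mkzCoeff_zero_right ht0 ht1.ne] using (hasSum_nat_add_iff' 1).mpr ha.hasSum
    have hrec : HasSum (fun k => a (k + 1))
        (x * ∑' k, a k + ((∏ s ∈ range (n + 1), (1 - t ^ s * (t * x)))⁻¹ - 1)) := by
      have hb1 := (hasSum_nat_add_iff' 1).mpr hb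
      simp only [Finset.sum_range_one, mkzCoeff_zero_right ht0 ht1.ne, pow_zero, mul_one] at hb1
      have e : (fun k => a (k + 1)) =
          fun k => x * a k + mkzCoeff t n (k + 1) * (t * x) ^ (k + 1) :=
        funext fun k => by simp only [a, mkzCoeff_succ_succ ht0 ht1.ne]; ring
      rw [e]
      exact (ha.hasSum.mul_left x).add hb1
    have hS : ∑' k, a k = ((1 - x) * ∏ s ∈ range (n + 1), (1 - t ^ s * (t * x)))⁻¹ := by
      rw [mul_inv, eq_comm, inv_mul_eq_iff_eq_mul₀ (by linarith)]
      linarith [htail.unique hrec]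
    rw [prod_one_sub_pow_mul_succ, ← hS]
    exact ha.hasSum

noncomputable def mkzWeight (t : ℝ) (n : ℕ) (x : ℝ) (k : ℕ) : ℝ :=
  mkzCoeff t n k * x ^ k * ∏ s ∈ range (n + 1), (1 - t ^ s * x)

lemma prod_one_sub_pow_mul_pos (ht0 : 0 ≤ t) (ht1 : t < 1) (n : ℕ) (hx0 : 0 ≤ x)
    (hx1 : x < 1) :
    0 < ∏ s ∈ range (n + 1), (1 - t ^ s * x) :=
  Finset.prod_pos fun s _ => by nlinarith [pow_le_one₀ ht0 ht1.le (n := s), pow_nonneg ht0 s]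

lemma hasSum_mkzWeight (ht0 : 0 ≤ t) (ht1 : t < 1) (n : ℕ) (hx0 : 0 ≤ x) (hx1 : x < 1) :
    HasSum (mkzWeight t n x) 1 := by
  rw [← inv_mul_cancel₀ (prod_one_sub_pow_mul_pos ht0 ht1 n hx0 hx1).ne']
  exact (hasSum_mkzCoeff_mul_pow ht0 ht1 n hx0 hx1).mul_right _

lemma mkzWeight_nonneg (ht0 : 0 ≤ t) (ht1 : t < 1) (n : ℕ) (hx0 : 0 ≤ x) (hx1 : x < 1)
    (k : ℕ) : 0 ≤ mkzWeight t n x k :=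
  mul_nonneg (mul_nonneg (mkzCoeff_pos ht0 ht1.ne n k).le (pow_nonneg hx0 k))
    (prod_one_sub_pow_mul_pos ht0 ht1 n hx0 hx1).le

lemma mkzWeight_succ_mul_mkzNode (ht0 : 0 ≤ t) (ht : t ≠ 1) (n k : ℕ) :
    mkzWeight t n x (k + 1) * mkzNode t n (k + 1) = x * mkzWeight t n x k := by
  simp only [mkzWeight, ← mkzCoeff_succ_mul_mkzNode ht0 ht n k]
  ring

lemma tsum_mkzWeight_mul_sub_sq_le (ht0 : 0 ≤ t) (ht1 : t < 1) (n : ℕ) (hx0 : 0 ≤ x)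
    (hx1 : x < 1) :
    ∑' k, mkzWeight t n x k * (mkzNode t n k - x) ^ 2 ≤ (pqInt 1 t (n + 1))⁻¹ := by
  have hvar := tsum_mul_sub_sq_le (mkzWeight_nonneg ht0 ht1 n hx0 hx1)
    (hasSum_mkzWeight ht0 ht1 n hx0 hx1) (mkzNode_mem_Icc ht0 ht1.ne n) hx0 (mkzNode_zero n)
    (mkzWeight_succ_mul_mkzNode ht0 ht1.ne n) (mkzNode_succ_le ht0 ht1.ne n)
  exact hvar.trans (mul_le_of_le_one_right (inv_pos.mpr (pqInt_one_succ_pos ht0 ht1.ne n)).le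
    hx1.le)

lemma mkz_one_eq_tsum (n : ℕ) (f : ℝ → ℝ) (hx : x ≠ 1) :
    mkz 1 t n f x = ∑' k, mkzWeight t n x k * f (mkzNode t n k) := by
  simp [mkz, hx, mkzWeight, mkzCoeff, mkzNode]

theorem abs_mkz_one_sub_le (ht0 : 0 ≤ t) (ht1 : t < 1) (n : ℕ) {f : ℝ → ℝ}
    (hf : ContinuousOn f (Icc 0 1)) (hx : x ∈ Icc (0 : ℝ) 1) :
    |mkz 1 t n f x - f x| ≤ 2 * modCont f (Real.sqrt ((pqInt 1 t (n + 1))⁻¹)) := by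
  have hc := inv_pos.mpr (pqInt_one_succ_pos ht0 ht1.ne n)
  rcases hx.2.eq_or_lt with rfl | hx1
  · rw [mkz, if_pos rfl, sub_self, abs_zero]
    linarith [modCont_nonneg hf (Real.sqrt_nonneg ((pqInt 1 t (n + 1))⁻¹))]
  rw [mkz_one_eq_tsum n f hx1.ne]
  refine abs_tsum_mul_sub_le_two_mul_modCont hf (mkzWeight_nonneg ht0 ht1 n hx.1 hx1)
    (hasSum_mkzWeight ht0 ht1 n hx.1 hx1) (mkzNode_mem_Icc ht0 ht1.ne n) hx
    (Real.sqrt_pos.mpr hc) ?_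
  rw [Real.sq_sqrt hc.le]
  exact tsum_mkzWeight_mul_sub_sq_le ht0 ht1 n hx.1 hx1

end MKZOperator

section Rescaling

variable {p : ℝ}

lemma mul_pqInt_eq_pow_mul (hp : p ≠ 0) (q : ℝ) (m : ℕ) :
    p * pqInt p q m = p ^ m * pqInt 1 (q / p) m := by
  rcases eq_or_ne q p with rfl | hqp
  · simp [pqInt, div_self hp]
  · have h1 : p - q ≠ 0 := sub_ne_zero.mpr hqp.symm
    have h2 : 1 - q / p ≠ 0 := by rw [one_sub_div hp]; exact div_ne_zero h1 hp
    rw [pqInt, pqInt, one_pow, div_pow]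
    field_simp

lemma pqInt_succ_eq_pow_mul (hp : p ≠ 0) (q : ℝ) (m : ℕ) :
    pqInt p q (m + 1) = p ^ m * pqInt 1 (q / p) (m + 1) :=
  mul_left_cancel₀ hp (by rw [mul_pqInt_eq_pow_mul hp, pow_succ']; ring)

lemma pqFact_eq_pow_mul (hp : p ≠ 0) (q : ℝ) (m : ℕ) :
    pqFact p q m = p ^ (∑ j ∈ range m, j) * pqFact 1 (q / p) m := by
  induction m with
  | zero => simp [pqFact_zero]
  | succ m ih =>
    rw [pqFact_succ, pqFact_succ, ih, pqInt_succ_eq_pow_mul hp, Finset.sum_range_succ, pow_add]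
    ring

lemma sum_range_add_id (n k : ℕ) :
    ∑ j ∈ range (n + k), j = k * n + ∑ j ∈ range k, j + ∑ j ∈ range n, j := by
  rw [Finset.sum_range_add, Finset.sum_add_distrib, Finset.sum_const, Finset.card_range,
    smul_eq_mul]
  ring

lemma pqBinom_add_eq_pow_mul (hp : p ≠ 0) (q : ℝ) (n k : ℕ) :
    pqBinom p q (n + k) k = p ^ (k * n) * pqBinom 1 (q / p) (n + k) k := by
  simp only [pqBinom, Nat.add_sub_cancel, pqFact_eq_pow_mul hp, sum_range_add_id, pow_add]
  have hpow : p ^ (∑ j ∈ range k, j) * p ^ (∑ j ∈ range n, j) ≠ 0 := by positivity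
  rw [← mul_div_assoc]
  conv_rhs => rw [← mul_div_mul_left _ _ hpow]
  congr 1 <;> ring

lemma prod_pow_sub_pow_mul_eq (hp : p ≠ 0) (q x : ℝ) (n : ℕ) :
    ∏ s ∈ range (n + 1), (p ^ s - q ^ s * x) =
      p ^ (∑ s ∈ range (n + 1), s) * ∏ s ∈ range (n + 1), (1 - (q / p) ^ s * x) := by
  rw [← Finset.prod_pow_eq_pow_sum, ← Finset.prod_mul_distrib]
  refine Finset.prod_congr rfl fun s _ => ?_
  have := pow_ne_zero s hp
  rw [div_pow]
  field_simp

lemma pow_mul_pqInt_div_pqInt_add (hp : p ≠ 0) (q : ℝ) (n k : ℕ) :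
    p ^ n * pqInt p q k / pqInt p q (n + k) =
      pqInt 1 (q / p) k / pqInt 1 (q / p) (n + k) := by
  rw [← mul_div_mul_left _ _ hp, mul_left_comm, mul_pqInt_eq_pow_mul hp, mul_pqInt_eq_pow_mul hp,
    ← mul_assoc, ← pow_add, mul_div_mul_left _ _ (pow_ne_zero _ hp)]

lemma mkz_eq_mkz_one (hp : p ≠ 0) (q : ℝ) (n : ℕ) (f : ℝ → ℝ) :
    mkz p q n f = mkz 1 (q / p) n f := by
  funext x
  unfold mkz
  split_ifs
  · rfl
  have hT : n * (n + 1) / 2 = ∑ s ∈ range (n + 1), s := by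
    rw [Finset.sum_range_id, Nat.add_sub_cancel, mul_comm]
  simp only [one_pow, inv_one, one_mul, mul_one, pqBinom_add_eq_pow_mul hp,
    prod_pow_sub_pow_mul_eq hp, pow_mul_pqInt_div_pqInt_add hp, hT]
  rw [inv_mul_eq_iff_eq_mul₀ (pow_ne_zero _ hp), ← tsum_mul_left]
  refine tsum_congr fun k => ?_
  rw [mul_right_comm _ (x ^ k), mul_comm (p ^ (k * n)), mul_inv_cancel_right₀ (pow_ne_zero _ hp)]
  ring

end Rescaling

theorem mkz_modulus_general (p q : ℝ) (hq : 0 < q) (hqp : q < p)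
    (n : ℕ) (f : ℝ → ℝ) (hf : ContinuousOn f (Set.Icc 0 1))
    (x : ℝ) (hx : x ∈ Set.Icc (0 : ℝ) 1) :
    |mkz p q n f x - f x| ≤
      2 * modCont f (Real.sqrt (p ^ n / pqInt p q (n + 1))) := by
  have hp : 0 < p := hq.trans hqp
  have hδ : p ^ n / pqInt p q (n + 1) = (pqInt 1 (q / p) (n + 1))⁻¹ := by
    rw [pqInt_succ_eq_pow_mul hp.ne', div_mul_cancel_left₀ (pow_ne_zero n hp.ne')]
  rw [mkz_eq_mkz_one hp.ne', hδ]
  exact abs_mkz_one_sub_le (div_pos hq hp).le ((div_lt_one hp).mpr hqp) n hf hx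

theorem mkz_modulus (p q : ℝ) (hq : 0 < q) (hqp : q < p) (hp : p ≤ 1)
    (n : ℕ) (f : ℝ → ℝ) (hf : ContinuousOn f (Set.Icc 0 1))
    (x : ℝ) (hx : x ∈ Set.Icc (0 : ℝ) 1) :
    |mkz p q n f x - f x| ≤
      2 * modCont f (Real.sqrt (p ^ n / pqInt p q (n + 1))) :=
  mkz_modulus_general p q hq hqp n f hf x hx
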